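/- Let d ∈ ℕ with d ≥ 1, 1 ≤ p < ∞, and s ∈ ℝ with s > d/p. Then there is a constant c > 0 such that for every g : ℝ^d → ℂ that is continuously differentiable and bounded together with its first-order derivatives and satisfies g(0) = 0, one has ∫_{ℝ^d} ‖z‖^{−sp} |g(z)|^p dz ≤ c · ∫_{ℝ^d} ‖z‖^{(−s+1)p} Σ_{j=1}^d |(∂_j g)(z)|^p dz, where both sides are allowed to be infinite. -/

import Mathlib

/-!
Writing `g z = ∫₀¹ Dg(t z) z dt` bounds `|g z|` by `‖z‖ ∫₀¹ ∑ⱼ |∂ⱼ g (t z)| dt`. Hölder's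
inequality on `(0, 1]` with a weight `t ^ β`, `β < p - 1`, moves the `p`-th power inside the
`t`-integral. After Tonelli, the substitution `w = t z` in each slice produces the factor
`t ^ (-(-s + 1) p - d)`, so the constant is `∫₀¹ t ^ (β + (s - 1) p - d) dt`, finite once
`β > d + p - 1 - s p`. Such a `β` exists exactly because `s p > d`.
-/

open MeasureTheory ENNReal Set Module

lemma lintegral_Ioc_rpow_lt_top {e : ℝ} (he : -1 < e) :
    ∫⁻ t in Ioc (0 : ℝ) 1, ENNReal.ofReal t ^ e < ∞ := by
  have hint : IntegrableOn (fun t : ℝ => t ^ e) (Ioc 0 1) :=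
    (intervalIntegrable_iff_integrableOn_Ioc_of_le zero_le_one).1
      (intervalIntegral.intervalIntegrable_rpow' he)
  refine lt_of_eq_of_lt (setLIntegral_congr_fun measurableSet_Ioc fun t ht => ?_) hint.2
  rw [Real.enorm_eq_ofReal (Real.rpow_nonneg ht.1.le e), ENNReal.ofReal_rpow_of_pos ht.1]

lemma exists_rpow_lintegral_Ioc_le {p β : ℝ} (hp : 1 ≤ p) (hβ : β < p - 1) :
    ∃ K : ℝ≥0∞, K ≠ ∞ ∧ ∀ ψ : ℝ → ℝ≥0∞, AEMeasurable ψ (volume.restrict (Ioc 0 1)) →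
      (∫⁻ t in Ioc (0 : ℝ) 1, ψ t) ^ p ≤
        K * ∫⁻ t in Ioc (0 : ℝ) 1, ENNReal.ofReal t ^ β * ψ t ^ p := by
  rcases hp.eq_or_lt with rfl | hp
  · refine ⟨1, one_ne_top, fun ψ _ => ?_⟩
    simp only [rpow_one, one_mul]
    refine setLIntegral_mono' measurableSet_Ioc fun t ht => le_mul_of_one_le_left' ?_
    exact one_le_rpow_of_pos_of_le_one_of_neg (ofReal_pos.2 ht.1)
      (ofReal_le_one.2 ht.2) (by linarith)
  · have hpq : p.HolderConjugate (p / (p - 1)) := .conjExponent hp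
    refine ⟨(∫⁻ t in Ioc (0 : ℝ) 1, ENNReal.ofReal t ^ (-β / (p - 1))) ^ (p - 1),
      rpow_ne_top_of_nonneg (by linarith) (lintegral_Ioc_rpow_lt_top ?_).ne, fun ψ hψ => ?_⟩
    · rw [lt_div_iff₀ (by linarith)]; linarith
    have hHolder := ENNReal.lintegral_mul_le_Lp_mul_Lq _ hpq
      (f := fun t => ENNReal.ofReal t ^ (β / p) * ψ t) (g := fun t => ENNReal.ofReal t ^ (-β / p))
      ((measurable_ofReal.pow_const _).aemeasurable.mul hψ)
      (measurable_ofReal.pow_const _).aemeasurable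
    have hψ_eq : ∫⁻ t in Ioc (0 : ℝ) 1, ENNReal.ofReal t ^ (β / p) * ψ t *
        ENNReal.ofReal t ^ (-β / p) = ∫⁻ t in Ioc (0 : ℝ) 1, ψ t := by
      refine setLIntegral_congr_fun measurableSet_Ioc fun t ht => ?_
      rw [mul_right_comm, ← rpow_add _ _ (ofReal_pos.2 ht.1).ne' ofReal_ne_top, neg_div,
        add_neg_cancel, rpow_zero, one_mul]
    have hp0 : 0 ≤ p := by linarith
    simp only [Pi.mul_apply, hψ_eq, mul_rpow_of_nonneg _ _ hp0, ← rpow_mul] at hHolder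
    calc (∫⁻ t in Ioc (0 : ℝ) 1, ψ t) ^ p
        ≤ ((∫⁻ t in Ioc (0 : ℝ) 1, ENNReal.ofReal t ^ (β / p * p) * ψ t ^ p) ^ (1 / p) *
          (∫⁻ t in Ioc (0 : ℝ) 1, ENNReal.ofReal t ^ (-β / p * (p / (p - 1)))) ^
            (1 / (p / (p - 1)))) ^ p := rpow_le_rpow hHolder hp0
      _ = _ := by
        rw [mul_rpow_of_nonneg _ _ hp0, ← rpow_mul, ← rpow_mul, one_div_mul_cancel hpq.ne_zero,
          rpow_one, mul_comm]
        congr 3 <;> field_simp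

section
variable {ι F : Type*} [Fintype ι] [DecidableEq ι] [NormedAddCommGroup F] [NormedSpace ℝ F]

lemma enorm_apply_le_enorm_mul_sum (L : EuclideanSpace ℝ ι →L[ℝ] F) (z : EuclideanSpace ℝ ι) :
    ‖L z‖ₑ ≤ ‖z‖ₑ * ∑ j, ‖L (EuclideanSpace.single j 1)‖ₑ := by
  conv_lhs => rw [← (EuclideanSpace.basisFun ι ℝ).sum_repr z]
  simp only [map_sum, map_smul, EuclideanSpace.basisFun_repr, EuclideanSpace.basisFun_apply,
    Finset.mul_sum]
  refine (enorm_sum_le _ _).trans (Finset.sum_le_sum fun j _ => ?_)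
  rw [enorm_smul]
  gcongr
  exact PiLp.enorm_apply_le z j

end

section
variable {E F : Type*} [NormedAddCommGroup E] [NormedSpace ℝ E] [NormedAddCommGroup F]
  [NormedSpace ℝ F] [CompleteSpace F]

lemma enorm_sub_le_lintegral_enorm_fderiv {g : E → F} (hg : ContDiff ℝ 1 g) (z : E) :
    ‖g z - g 0‖ₑ ≤ ∫⁻ t in Ioc (0 : ℝ) 1, ‖fderiv ℝ g (t • z) z‖ₑ := by
  have hderiv (t : ℝ) : HasDerivAt (fun t : ℝ => g (t • z)) (fderiv ℝ g (t • z) z) t := by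
    simpa [Function.comp_def] using
      (hg.differentiable one_ne_zero (t • z)).hasFDerivAt.comp_hasDerivAt t
        ((hasDerivAt_id t).smul_const z)
  have hcont : Continuous fun t : ℝ => fderiv ℝ g (t • z) z := by
    have := hg.continuous_fderiv one_ne_zero
    fun_prop
  have hftc := intervalIntegral.integral_eq_sub_of_hasDerivAt (fun t _ => hderiv t)
    (hcont.intervalIntegrable 0 1)
  simp only [one_smul, zero_smul] at hftc
  rw [← hftc, intervalIntegral.integral_of_le zero_le_one]
  exact enorm_integral_le_lintegral_enorm _

end

section
variable {ι F : Type*} [Fintype ι] [DecidableEq ι] [NormedAddCommGroup F] [NormedSpace ℝ F]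
  [CompleteSpace F] {g : EuclideanSpace ℝ ι → F}

lemma enorm_le_enorm_mul_lintegral_sum_fderiv (hg : ContDiff ℝ 1 g) (hg0 : g 0 = 0)
    (z : EuclideanSpace ℝ ι) :
    ‖g z‖ₑ ≤ ‖z‖ₑ * ∫⁻ t in Ioc (0 : ℝ) 1,
      ∑ j, ‖fderiv ℝ g (t • z) (EuclideanSpace.single j 1)‖ₑ :=
  calc ‖g z‖ₑ = ‖g z - g 0‖ₑ := by rw [hg0, sub_zero]
    _ ≤ ∫⁻ t in Ioc (0 : ℝ) 1, ‖fderiv ℝ g (t • z) z‖ₑ := enorm_sub_le_lintegral_enorm_fderiv hg z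
    _ ≤ ∫⁻ t in Ioc (0 : ℝ) 1,
          ‖z‖ₑ * ∑ j, ‖fderiv ℝ g (t • z) (EuclideanSpace.single j 1)‖ₑ :=
        lintegral_mono fun _ => enorm_apply_le_enorm_mul_sum _ z
    _ = _ := lintegral_const_mul' _ _ enorm_ne_top

lemma rpow_enorm_le_lintegral_sum_rpow_fderiv (hg : ContDiff ℝ 1 g) (hg0 : g 0 = 0)
    {p s β : ℝ} {K : ℝ≥0∞} (hp : 1 ≤ p)
    (hK : ∀ ψ : ℝ → ℝ≥0∞, AEMeasurable ψ (volume.restrict (Ioc 0 1)) →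
      (∫⁻ t in Ioc (0 : ℝ) 1, ψ t) ^ p ≤
        K * ∫⁻ t in Ioc (0 : ℝ) 1, ENNReal.ofReal t ^ β * ψ t ^ p)
    (z : EuclideanSpace ℝ ι) :
    ‖z‖ₑ ^ (-s * p) * ‖g z‖ₑ ^ p ≤ K * (Fintype.card ι : ℝ≥0∞) ^ (p - 1) *
      (‖z‖ₑ ^ ((-s + 1) * p) * ∫⁻ t in Ioc (0 : ℝ) 1,
        ENNReal.ofReal t ^ β * ∑ j, ‖fderiv ℝ g (t • z) (EuclideanSpace.single j 1)‖ₑ ^ p) := by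
  have hp0 : 0 < p := by linarith
  rcases eq_or_ne z 0 with rfl | hz
  · simp [hg0, zero_rpow_of_pos hp0]
  have hz0 : ‖z‖ₑ ≠ 0 := enorm_ne_zero.2 hz
  have hcont := hg.continuous_fderiv one_ne_zero
  have hmeas : Measurable fun t : ℝ => ∑ j, ‖fderiv ℝ g (t • z) (EuclideanSpace.single j 1)‖ₑ :=
    Continuous.measurable (by fun_prop)
  calc ‖z‖ₑ ^ (-s * p) * ‖g z‖ₑ ^ p
      ≤ ‖z‖ₑ ^ (-s * p) * (‖z‖ₑ * ∫⁻ t in Ioc (0 : ℝ) 1,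
          ∑ j, ‖fderiv ℝ g (t • z) (EuclideanSpace.single j 1)‖ₑ) ^ p := by
        gcongr
        exact enorm_le_enorm_mul_lintegral_sum_fderiv hg hg0 z
    _ = ‖z‖ₑ ^ ((-s + 1) * p) * (∫⁻ t in Ioc (0 : ℝ) 1,
          ∑ j, ‖fderiv ℝ g (t • z) (EuclideanSpace.single j 1)‖ₑ) ^ p := by
        rw [mul_rpow_of_nonneg _ _ hp0.le, ← mul_assoc, ← rpow_add _ _ hz0 enorm_ne_top]
        ring_nf
    _ ≤ ‖z‖ₑ ^ ((-s + 1) * p) * (K * ∫⁻ t in Ioc (0 : ℝ) 1, ENNReal.ofReal t ^ β *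
          (∑ j, ‖fderiv ℝ g (t • z) (EuclideanSpace.single j 1)‖ₑ) ^ p) := by
        gcongr
        exact hK _ hmeas.aemeasurable
    _ ≤ ‖z‖ₑ ^ ((-s + 1) * p) * (K * ∫⁻ t in Ioc (0 : ℝ) 1, ENNReal.ofReal t ^ β *
          ((Fintype.card ι : ℝ≥0∞) ^ (p - 1) *
            ∑ j, ‖fderiv ℝ g (t • z) (EuclideanSpace.single j 1)‖ₑ ^ p)) := by
        gcongr with t
        simpa using rpow_sum_le_const_mul_sum_rpow Finset.univ _ hp
    _ = _ := by
        simp_rw [mul_left_comm (ENNReal.ofReal _ ^ β)]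
        rw [lintegral_const_mul' _ _ (rpow_ne_top_of_nonneg (by linarith) (natCast_ne_top _))]
        ring

end

section
variable {E : Type*} [NormedAddCommGroup E] [NormedSpace ℝ E] [FiniteDimensional ℝ E]
  [MeasurableSpace E] [BorelSpace E] (μ : Measure E) [μ.IsAddHaarMeasure]

lemma lintegral_comp_smul_of_pos (f : E → ℝ≥0∞) {t : ℝ} (ht : 0 < t) :
    ∫⁻ x, f (t • x) ∂μ = ENNReal.ofReal t ^ (-(finrank ℝ E : ℝ)) * ∫⁻ x, f x ∂μ := by
  have hmap : ∫⁻ x, f x ∂μ.map (t • ·) = ∫⁻ x, f (t • x) ∂μ :=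
    lintegral_map_equiv f (MeasurableEquiv.smul₀ t ht.ne')
  rw [← hmap, Measure.map_addHaar_smul μ ht.ne', lintegral_smul_measure, smul_eq_mul,
    ofReal_rpow_of_pos ht, Real.rpow_neg ht.le, Real.rpow_natCast,
    abs_of_pos (inv_pos.2 (pow_pos ht _))]

lemma lintegral_enorm_rpow_mul_comp_smul (Φ : E → ℝ≥0∞) (a : ℝ) {t : ℝ} (ht : 0 < t) :
    ∫⁻ x, ‖x‖ₑ ^ a * Φ (t • x) ∂μ =
      ENNReal.ofReal t ^ (-a - finrank ℝ E) * ∫⁻ x, ‖x‖ₑ ^ a * Φ x ∂μ := by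
  have hnorm (x : E) : ‖t⁻¹ • x‖ₑ ^ a = ENNReal.ofReal t ^ (-a) * ‖x‖ₑ ^ a := by
    rw [enorm_smul, Real.enorm_eq_ofReal (inv_nonneg.2 ht.le), ofReal_inv_of_pos ht,
      mul_rpow_of_ne_top (inv_ne_top.2 (ofReal_pos.2 ht).ne') enorm_ne_top, inv_rpow, rpow_neg]
  have hscale := lintegral_comp_smul_of_pos μ (fun x => ‖t⁻¹ • x‖ₑ ^ a * Φ x) ht
  simp only [smul_smul, inv_mul_cancel₀ ht.ne', one_smul, hnorm, mul_assoc] at hscale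
  rw [hscale, lintegral_const_mul' _ _ (rpow_ne_top_of_ne_zero (ofReal_pos.2 ht).ne' ofReal_ne_top),
    ← mul_assoc, ← rpow_add _ _ (ofReal_pos.2 ht).ne' ofReal_ne_top, add_comm, sub_eq_add_neg]

lemma lintegral_enorm_rpow_mul_lintegral_Ioc_comp_smul {Φ : E → ℝ≥0∞} (hΦ : Measurable Φ)
    (a β : ℝ) :
    ∫⁻ x, ‖x‖ₑ ^ a * (∫⁻ t in Ioc (0 : ℝ) 1, ENNReal.ofReal t ^ β * Φ (t • x)) ∂μ =
      (∫⁻ t in Ioc (0 : ℝ) 1, ENNReal.ofReal t ^ (β - a - finrank ℝ E)) *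
        ∫⁻ x, ‖x‖ₑ ^ a * Φ x ∂μ := by
  have hmeas : Measurable (Function.uncurry fun (x : E) (t : ℝ) =>
      ‖x‖ₑ ^ a * (ENNReal.ofReal t ^ β * Φ (t • x))) := by
    fun_prop
  have hinner (x : E) : Measurable fun t : ℝ => ENNReal.ofReal t ^ β * Φ (t • x) := by fun_prop
  simp_rw [← lintegral_const_mul _ (hinner _)]
  rw [lintegral_lintegral_swap hmeas.aemeasurable, ← lintegral_mul_const _ (by fun_prop)]
  refine setLIntegral_congr_fun measurableSet_Ioc fun t ht => ?_
  have ht0 : ENNReal.ofReal t ≠ 0 := (ofReal_pos.2 ht.1).ne'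
  simp_rw [mul_left_comm _ (ENNReal.ofReal t ^ β)]
  rw [lintegral_const_mul' _ _ (rpow_ne_top_of_ne_zero ht0 ofReal_ne_top),
    lintegral_enorm_rpow_mul_comp_smul μ Φ a ht.1, ← mul_assoc,
    ← rpow_add _ _ ht0 ofReal_ne_top, add_sub_assoc', ← sub_eq_add_neg]

end

theorem stmt1_general (d : ℕ) (p s : ℝ) (hp : 1 ≤ p) (hs : s > (d : ℝ) / p) :
    ∃ c : ℝ, 0 < c ∧
      ∀ g : EuclideanSpace ℝ (Fin d) → ℂ,
        ContDiff ℝ 1 g →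
        (∃ C : ℝ, ∀ z, ‖g z‖ ≤ C ∧ ‖fderiv ℝ g z‖ ≤ C) →
        g 0 = 0 →
        (∫⁻ z, ENNReal.ofReal ‖z‖ ^ (-s * p) * ENNReal.ofReal ‖g z‖ ^ p) ≤
          ENNReal.ofReal c *
            ∫⁻ z, ENNReal.ofReal ‖z‖ ^ ((-s + 1) * p) *
              ∑ j, ENNReal.ofReal ‖fderiv ℝ g z (EuclideanSpace.single j 1)‖ ^ p := by
  have hsp : (d : ℝ) < s * p := (div_lt_iff₀ (by linarith)).1 hs
  set β : ℝ := ((d : ℝ) - s * p) / 2 + p - 1 with hβ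
  obtain ⟨K, hK, hHolder⟩ := exists_rpow_lintegral_Ioc_le hp (β := β) (by linarith)
  set I := ∫⁻ t in Ioc (0 : ℝ) 1, ENNReal.ofReal t ^ (β - (-s + 1) * p - d)
  have hI : I ≠ ∞ := (lintegral_Ioc_rpow_lt_top (by linarith)).ne
  set κ := K * (d : ℝ≥0∞) ^ (p - 1) * I
  have hκ : κ ≠ ∞ := by finiteness
  refine ⟨κ.toReal + 1, by positivity, fun g hg _ hg0 => ?_⟩
  have hcont := hg.continuous_fderiv one_ne_zero
  set Φ := fun z => ∑ j, ‖fderiv ℝ g z (EuclideanSpace.single j 1)‖ₑ ^ p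
  have hΦ : Measurable Φ := by fun_prop
  simp only [ofReal_norm]
  calc ∫⁻ z, ‖z‖ₑ ^ (-s * p) * ‖g z‖ₑ ^ p
      ≤ ∫⁻ z, K * (d : ℝ≥0∞) ^ (p - 1) *
          (‖z‖ₑ ^ ((-s + 1) * p) * ∫⁻ t in Ioc (0 : ℝ) 1, ENNReal.ofReal t ^ β * Φ (t • z)) :=
        lintegral_mono fun z => by
          simpa using rpow_enorm_le_lintegral_sum_rpow_fderiv hg hg0 hp hHolder z
    _ = κ * ∫⁻ z, ‖z‖ₑ ^ ((-s + 1) * p) * Φ z := by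
        rw [lintegral_const_mul' _ _ (by finiteness),
          lintegral_enorm_rpow_mul_lintegral_Ioc_comp_smul volume hΦ, finrank_euclideanSpace_fin]
        simp only [κ, I, mul_assoc]
    _ ≤ ENNReal.ofReal (κ.toReal + 1) * ∫⁻ z, ‖z‖ₑ ^ ((-s + 1) * p) * Φ z := by
        gcongr
        exact (le_ofReal_iff_toReal_le hκ (by positivity)).2 (by linarith)

/-- Hardy inequality at a point (`r = 1` slice version): for `C¹` bounded functions vanishing
at the origin, the weighted `L_p`-norm with weight `‖z‖^{-s}` is controlled by the weighted
`L_p`-norm of the gradient with weight `‖z‖^{-s+1}`. -/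
theorem stmt1 (d : ℕ) (hd : 1 ≤ d) (p s : ℝ) (hp : 1 ≤ p) (hs : s > (d : ℝ) / p) :
    ∃ c : ℝ, 0 < c ∧
      ∀ g : EuclideanSpace ℝ (Fin d) → ℂ,
        ContDiff ℝ 1 g →
        (∃ C : ℝ, ∀ z, ‖g z‖ ≤ C ∧ ‖fderiv ℝ g z‖ ≤ C) →
        g 0 = 0 →
        (∫⁻ z, ENNReal.ofReal ‖z‖ ^ (-s * p) * ENNReal.ofReal ‖g z‖ ^ p) ≤
          ENNReal.ofReal c *
            ∫⁻ z, ENNReal.ofReal ‖z‖ ^ ((-s + 1) * p) *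
              ∑ j, ENNReal.ofReal ‖fderiv ℝ g z (EuclideanSpace.single j 1)‖ ^ p :=
  stmt1_general d p s hp hs
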